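/- Let n ≥ 1 be an integer, a, c ∈ ℝ, σ > 0, and let u(y) = a + c·y^{σ+1}/(σ+1). Then for every x > 0 with c²x^{2σ} < 1, setting ν := (1 − c²x^{2σ})^{−1/2}, the model radial mean curvature satisfies the exact identity H[u](x) = −c·x^σ·ν³·( n(1 − c²x^{2σ}) − σ ). -/

import Mathlib

/-!
Writing `p = u'`, the quotient `p / √(1 - p²)` has derivative `p' / (1 - p²)^{3/2}`, so the
product rule gives, for any `u`, `H[u](x) = ν³ (x p'(x) - n p(x) (1 - p(x)²))` with
`ν = (1 - p(x)²)^{-1/2}`. For the barrier, `p(y) = c y^σ`, so `x p'(x) = σ p(x)` and the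
bracket factors as `-c x^σ (n (1 - c² x^{2σ}) - σ)`.
-/

/-- The model radial mean curvature operator
`H[u](x) = x^{n+1} · d/dx ( x^{−n} u'(x) / √(1 − u'(x)²) )`, the mean curvature of the
radial graph `t = u(x)` in the metric `x^{−2}(dx² − dt² + Σ (dy^A)²)`. -/
noncomputable def modelH (n : ℕ) (u : ℝ → ℝ) (x : ℝ) : ℝ :=
  x ^ (n + 1) *
    deriv (fun y : ℝ => y ^ (-(n : ℤ)) * deriv u y / Real.sqrt (1 - (deriv u y) ^ 2)) x

open Filter Topology

theorem HasDerivAt.div_sqrt_one_sub_sq {f : ℝ → ℝ} {f' x : ℝ} (hf : HasDerivAt f f' x)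
    (h : f x ^ 2 < 1) :
    HasDerivAt (fun y => f y / √(1 - f y ^ 2)) (f' / √(1 - f x ^ 2) ^ 3) x := by
  have hs : 0 < 1 - f x ^ 2 := sub_pos.2 h
  have hS : 0 < √(1 - f x ^ 2) := Real.sqrt_pos.2 hs
  have hS2 : √(1 - f x ^ 2) ^ 2 = 1 - f x ^ 2 := Real.sq_sqrt hs.le
  have hsqrt : HasDerivAt (fun y => √(1 - f y ^ 2))
      (-(2 * f x ^ 1 * f') / (2 * √(1 - f x ^ 2))) x :=
    ((hf.pow 2).const_sub 1).sqrt hs.ne'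
  refine (hf.div hsqrt hS.ne').congr_deriv ?_
  field_simp
  linear_combination f' * hS2

theorem modelH_eq_of_deriv_eventuallyEq {n : ℕ} {u p : ℝ → ℝ} {p' x : ℝ}
    (hu : deriv u =ᶠ[𝓝 x] p) (hp : HasDerivAt p p' x) (hx : x ≠ 0) (h : p x ^ 2 < 1) :
    modelH n u x = (x * p' - n * p x * (1 - p x ^ 2)) / √(1 - p x ^ 2) ^ 3 := by
  have hS2 : √(1 - p x ^ 2) ^ 2 = 1 - p x ^ 2 := Real.sq_sqrt (sub_pos.2 h).le
  have hS : √(1 - p x ^ 2) ≠ 0 := (Real.sqrt_pos.2 (sub_pos.2 h)).ne'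
  have hinner : (fun y => y ^ (-(n : ℤ)) * deriv u y / √(1 - deriv u y ^ 2)) =ᶠ[𝓝 x]
      fun y => y ^ (-(n : ℤ)) * (p y / √(1 - p y ^ 2)) := by
    filter_upwards [hu] with y hy
    rw [hy, mul_div_assoc]
  have hderiv := (hasDerivAt_zpow (-(n : ℤ)) x (Or.inl hx)).fun_mul (hp.div_sqrt_one_sub_sq h)
  rw [modelH, hinner.deriv_eq, hderiv.deriv, zpow_sub_one₀ hx, zpow_neg, zpow_natCast]
  field_simp
  push_cast
  linear_combination -(x * x ^ n * n * p x) * hS2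

theorem hasDerivAt_add_mul_rpow_div (a c : ℝ) {σ y : ℝ} (hσ : σ + 1 ≠ 0) (hy : y ≠ 0) :
    HasDerivAt (fun y => a + c * y ^ (σ + 1) / (σ + 1)) (c * y ^ σ) y := by
  refine ((((Real.hasDerivAt_rpow_const (p := σ + 1) (Or.inl hy)).const_mul c).div_const
    (σ + 1)).const_add a).congr_deriv ?_
  rw [add_sub_cancel_right]
  field_simp

theorem barrier_mean_curvature_general (n : ℕ) (a c σ : ℝ) (hσ : 0 < σ)
    (x : ℝ) (hx : 0 < x) (hc : c ^ 2 * x ^ (2 * σ) < 1) :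
    modelH n (fun y => a + c * y ^ (σ + 1) / (σ + 1)) x =
      -c * x ^ σ * (1 / Real.sqrt (1 - c ^ 2 * x ^ (2 * σ))) ^ 3 *
        ((n : ℝ) * (1 - c ^ 2 * x ^ (2 * σ)) - σ) := by
  have hx2σ : x ^ (2 * σ) = (x ^ σ) ^ 2 := by
    rw [mul_comm, ← Nat.cast_ofNat, Real.rpow_mul_natCast hx.le]
  have hu : deriv (fun y => a + c * y ^ (σ + 1) / (σ + 1)) =ᶠ[𝓝 x] fun y => c * y ^ σ := by
    filter_upwards [eventually_ne_nhds hx.ne'] with y hy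
    exact (hasDerivAt_add_mul_rpow_div a c (by positivity) hy).deriv
  have hp : HasDerivAt (fun y => c * y ^ σ) (c * (σ * x ^ (σ - 1))) x :=
    (Real.hasDerivAt_rpow_const (Or.inl hx.ne')).const_mul c
  rw [modelH_eq_of_deriv_eventuallyEq hu hp hx.ne' (by rwa [mul_pow, ← hx2σ]), hx2σ,
    Real.rpow_sub_one hx.ne']
  field_simp
  ring

/-- Exact mean curvature of the barrier `u(y) = a + c y^{σ+1}/(σ+1)`:
for `x > 0` with `c²x^{2σ} < 1` and `ν := (1 − c²x^{2σ})^{−1/2}`,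
`H[u](x) = −c·x^σ·ν³·(n(1 − c²x^{2σ}) − σ)`. -/
theorem barrier_mean_curvature (n : ℕ) (hn : 1 ≤ n) (a c σ : ℝ) (hσ : 0 < σ)
    (x : ℝ) (hx : 0 < x) (hc : c ^ 2 * x ^ (2 * σ) < 1) :
    modelH n (fun y => a + c * y ^ (σ + 1) / (σ + 1)) x =
      -c * x ^ σ * (1 / Real.sqrt (1 - c ^ 2 * x ^ (2 * σ))) ^ 3 *
        ((n : ℝ) * (1 - c ^ 2 * x ^ (2 * σ)) - σ) :=
  barrier_mean_curvature_general n a c σ hσ x hx hc
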